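/- arXiv:math/0601228 — 3 statements merged into one kernel-verified Lean document; each statement's English description precedes it below -/
import Mathlib

section
/- Let ℬ be a unital C*-algebra, F a Hilbert ℬ-ℬ-bimodule, and for (β, ζ) ∈ ℬ × F let the unit ξ^⊙(β,ζ) in the time ordered Fock module be given by its n-particle components ξ_t^n(t_n,...,t_1) = e^{(t−t_n)β}ζ ⊙ e^{(t_n−t_{n-1})β}ζ ⊙ ... ⊙ e^{(t_2−t_1)β}ζ e^{t_1 β} on the simplex t > t_n > ... > t_1 > 0. Then ξ^⊙(β,ζ) is central (i.e. b ξ_t = ξ_t b for all b ∈ ℬ, t ≥ 0) if and only if β lies in the center of ℬ and ζ satisfies bζ = ζb for all b ∈ ℬ. -/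
/-- The time-ordered component
`ξ_tⁿ(t_n, …, t_1) = e^{(t-t_n)β}ζ ⊙ e^{(t_n-t_{n-1})β}ζ ⊙ ⋯ ⊙ e^{(t_2-t_1)β}ζ e^{t_1β}`
of the unit `ξ^⊙(β,ζ)` of the time ordered Fock module, built from the data:
`M n` is the `(n+1)`-fold internal tensor power `F^{⊙(n+1)}`, `ι : F → M 0` the
identification of `F` with the one-particle space, `tmul` the tensor multiplication
`F × F^{⊙(n+1)} → F^{⊙(n+2)}`, `Fr` the right action of `ℬ` on `F`, `eB s = e^{sβ}` and
`g s = e^{sβ}ζ`.  The times are listed in decreasing order `[t_n, …, t_1]`. -/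
noncomputable def timeOrderedUnitComp {B F : Type*} {M : ℕ → Type*}
    (ι : F → M 0) (tmul : ∀ n, F → M n → M (n + 1)) (Fr : B → F → F)
    (eB : ℝ → B) (g : ℝ → F) : (t : ℝ) → (ts : List ℝ) → M (ts.length - 1)
  | _, [] => ι (g 0)  -- junk value; only nonempty time tuples are used
  | t, [s] => ι (Fr (eB s) (g (t - s)))
  | t, s :: s' :: rest =>
      tmul _ (g (t - s)) (timeOrderedUnitComp ι tmul Fr eB g s (s' :: rest))

/-! Differentiating `b e^{tβ} = e^{tβ} b` at `t = 0` gives `bβ = βb`. Once `β` is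
central, every `e^{sβ}` is a central unit of `ℬ`, so its actions on `F` are injective and
commute with those of `ℬ`; hence the one-particle component
`e^{(t-s)β}ζ e^{sβ}` is central exactly when `ζ` is, and centrality passes through `⊙`
because `(xb) ⊙ y = x ⊙ (by)`. -/

open NormedSpace

theorem commute_of_forall_commute_exp_smul {A : Type*} [NormedRing A] [NormedAlgebra ℝ A]
    [CompleteSpace A] {a b : A} (h : ∀ t : ℝ, 0 ≤ t → Commute a (exp (t • b))) :
    Commute a b := by
  have hderiv := ((hasDerivAt_exp_smul_const b (0 : ℝ)).const_mul a).sub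
    ((hasDerivAt_exp_smul_const' b (0 : ℝ)).mul_const a)
  simp only [zero_smul, exp_zero, one_mul, mul_one] at hderiv
  have hzero : HasDerivWithinAt (fun t : ℝ => a * exp (t • b) - exp (t • b) * a)
      0 (Set.Ici 0) 0 :=
    (hasDerivWithinAt_const _ _ 0).congr (fun t ht => sub_eq_zero.mpr (h t ht)) (by simp)
  exact sub_eq_zero.mp ((uniqueDiffWithinAt_Ici 0).eq_deriv _ hderiv.hasDerivWithinAt hzero)

/-- The relative commutant `C_ℬ(X)` of a bimodule `X` with actions `l` and `r`. -/
def relCommutant {B X : Type*} (l r : B → X → X) : Set X :=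
  {x | ∀ b, l b x = r b x}

section relCommutant

variable {B X Y : Type*} {l r : B → X → X} {l' r' : B → Y → Y} {f : X → Y}

theorem mapsTo_relCommutant (hl : ∀ b x, l' b (f x) = f (l b x))
    (hr : ∀ b x, r' b (f x) = f (r b x)) :
    Set.MapsTo f (relCommutant l r) (relCommutant l' r') :=
  fun x hx b => by rw [hl, hr, hx b]

theorem map_mem_relCommutant_iff (hl : ∀ b x, l' b (f x) = f (l b x))
    (hr : ∀ b x, r' b (f x) = f (r b x)) (hf : Function.Injective f) {x : X} :
    f x ∈ relCommutant l' r' ↔ x ∈ relCommutant l r :=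
  ⟨fun h b => hf (by rw [← hl, ← hr, h b]), fun h => mapsTo_relCommutant hl hr h⟩

end relCommutant

section Actions

variable {B X : Type*} [Monoid B] {act : B → X → X}

theorem leftAct_comm_of_commute (hmul : ∀ a b x, act (a * b) x = act a (act b x))
    {a b : B} (h : Commute a b) (x : X) : act a (act b x) = act b (act a x) := by
  rw [← hmul, h.eq, hmul]

theorem rightAct_comm_of_commute (hmul : ∀ a b x, act (a * b) x = act b (act a x))
    {a b : B} (h : Commute a b) (x : X) : act a (act b x) = act b (act a x) := by
  rw [← hmul, ← h.eq, hmul]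

theorem injective_leftAct_of_isUnit (hmul : ∀ a b x, act (a * b) x = act a (act b x))
    (hone : ∀ x, act 1 x = x) {u : B} (hu : IsUnit u) : Function.Injective (act u) :=
  Function.LeftInverse.injective (g := act ↑hu.unit⁻¹) fun x => by
    rw [← hmul, hu.val_inv_mul, hone]

theorem injective_rightAct_of_isUnit (hmul : ∀ a b x, act (a * b) x = act b (act a x))
    (hone : ∀ x, act 1 x = x) {u : B} (hu : IsUnit u) : Function.Injective (act u) :=
  Function.LeftInverse.injective (g := act ↑hu.unit⁻¹) fun x => by
    rw [← hmul, hu.mul_val_inv, hone]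

end Actions

section Bimodule

variable {B F : Type*} [Monoid B] {Fl Fr : B → F → F} {u : B} {x : F}

theorem leftAct_mem_relCommutant_iff (hFl_mul : ∀ a b x, Fl (a * b) x = Fl a (Fl b x))
    (hFl_one : ∀ x, Fl 1 x = x) (hFlFr : ∀ a b x, Fl a (Fr b x) = Fr b (Fl a x))
    (hu : IsUnit u) (hu_comm : ∀ b, Commute b u) :
    Fl u x ∈ relCommutant Fl Fr ↔ x ∈ relCommutant Fl Fr :=
  map_mem_relCommutant_iff (fun b => leftAct_comm_of_commute hFl_mul (hu_comm b))
    (fun b x => (hFlFr u b x).symm) (injective_leftAct_of_isUnit hFl_mul hFl_one hu)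

theorem rightAct_mem_relCommutant_iff (hFr_mul : ∀ a b x, Fr (a * b) x = Fr b (Fr a x))
    (hFr_one : ∀ x, Fr 1 x = x) (hFlFr : ∀ a b x, Fl a (Fr b x) = Fr b (Fl a x))
    (hu : IsUnit u) (hu_comm : ∀ b, Commute b u) :
    Fr u x ∈ relCommutant Fl Fr ↔ x ∈ relCommutant Fl Fr :=
  map_mem_relCommutant_iff (fun b x => hFlFr b u x)
    (fun b => rightAct_comm_of_commute hFr_mul (hu_comm b))
    (injective_rightAct_of_isUnit hFr_mul hFr_one hu)

end Bimodule

theorem timeOrderedUnitComp_mem_relCommutant {B F : Type*} [Monoid B] {M : ℕ → Type*}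
    {Fl Fr : B → F → F} (hFr_mul : ∀ a b x, Fr (a * b) x = Fr b (Fr a x))
    (hFlFr : ∀ a b x, Fl a (Fr b x) = Fr b (Fl a x))
    {Bl Br : ∀ n, B → M n → M n} {ι : F → M 0} {tmul : ∀ n, F → M n → M (n + 1)}
    (hι_l : ∀ b x, Bl 0 b (ι x) = ι (Fl b x)) (hι_r : ∀ b x, Br 0 b (ι x) = ι (Fr b x))
    (htmul_l : ∀ n b x (y : M n), Bl (n + 1) b (tmul n x y) = tmul n (Fl b x) y)
    (htmul_r : ∀ n b x (y : M n), Br (n + 1) b (tmul n x y) = tmul n x (Br n b y))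
    (htmul_mid : ∀ n b x (y : M n), tmul n (Fr b x) y = tmul n x (Bl n b y))
    {eB : ℝ → B} (heB : ∀ b s, Commute b (eB s))
    {g : ℝ → F} (hg : ∀ s, g s ∈ relCommutant Fl Fr) :
    ∀ (t : ℝ) (ts : List ℝ), timeOrderedUnitComp ι tmul Fr eB g t ts
      ∈ relCommutant (Bl (ts.length - 1)) (Br (ts.length - 1))
  | _, [] => mapsTo_relCommutant hι_l hι_r (hg 0)
  | t, [s] =>
    mapsTo_relCommutant hι_l hι_r <|
      mapsTo_relCommutant (fun a x => hFlFr a (eB s) x)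
        (fun a x => rightAct_comm_of_commute hFr_mul (heB a s) x) (hg (t - s))
  | t, s :: s' :: rest => fun b => by
    have ih := timeOrderedUnitComp_mem_relCommutant hFr_mul hFlFr hι_l hι_r htmul_l htmul_r
      htmul_mid heB hg s (s' :: rest) b
    refine (htmul_l _ b _ _).trans (Eq.trans ?_ (htmul_r _ b _ _).symm)
    rw [hg (t - s) b, htmul_mid]
    exact congrArg _ ih

/-- **Centrality of the units of the time ordered Fock module** (used for
Proposition 6.6).  The unit `ξ^⊙(β,ζ)` — with 0-particle components `e^{tβ}` and
`n`-particle components `timeOrderedUnitComp` — is central, i.e. `b ξ_t = ξ_t b` for all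
`b ∈ ℬ` and `t ≥ 0`, if and only if `β` lies in the center of `ℬ` and `ζ` satisfies
`bζ = ζb` for all `b ∈ ℬ`. -/
theorem time_ordered_unit_central_iff
    {B : Type*} [CStarAlgebra B]
    {F : Type*}
    -- left and right actions of B on the bimodule F:
    (Fl Fr : B → F → F)
    (hFl_mul : ∀ a b x, Fl (a * b) x = Fl a (Fl b x)) (hFl_one : ∀ x, Fl 1 x = x)
    (hFr_mul : ∀ a b x, Fr (a * b) x = Fr b (Fr a x)) (hFr_one : ∀ x, Fr 1 x = x)
    (hFlFr : ∀ a b x, Fl a (Fr b x) = Fr b (Fl a x))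
    -- the internal tensor powers `M n = F^{⊙(n+1)}` with their left and right actions:
    {M : ℕ → Type*} (Bl Br : ∀ n, B → M n → M n)
    (ι : F → M 0) (hι_inj : Function.Injective ι)
    (tmul : ∀ n, F → M n → M (n + 1))
    (hι_l : ∀ b x, Bl 0 b (ι x) = ι (Fl b x))
    (hι_r : ∀ b x, Br 0 b (ι x) = ι (Fr b x))
    (htmul_l : ∀ n b x (y : M n), Bl (n + 1) b (tmul n x y) = tmul n (Fl b x) y)
    (htmul_r : ∀ n b x (y : M n), Br (n + 1) b (tmul n x y) = tmul n x (Br n b y))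
    (htmul_mid : ∀ n b x (y : M n), tmul n (Fr b x) y = tmul n x (Bl n b y))
    (β : B) (ζ : F)
    (eB : ℝ → B) (heB : ∀ s, eB s = NormedSpace.exp (s • β))
    (g : ℝ → F) (hg : ∀ s, g s = Fl (eB s) ζ) :
    -- centrality of all components of the unit `ξ^⊙(β,ζ)` …
    ((∀ t : ℝ, 0 ≤ t → ∀ b, b * eB t = eB t * b) ∧
      (∀ (b : B) (t : ℝ) (ts : List ℝ), ts ≠ [] →
        List.Chain' (· > ·) (t :: ts) → (∀ x ∈ ts, 0 < x) →
        Bl _ b (timeOrderedUnitComp ι tmul Fr eB g t ts)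
          = Br _ b (timeOrderedUnitComp ι tmul Fr eB g t ts)))
    -- … holds if and only if `β` is central in `ℬ` and `ζ` is central in `F`:
    ↔ ((∀ b, β * b = b * β) ∧ (∀ b, Fl b ζ = Fr b ζ)) := by
  have heB_isUnit : ∀ s, IsUnit (eB s) := fun s => heB s ▸
    isUnit_exp_of_mem_ball (𝕂 := ℝ) ((expSeries_radius_eq_top ℝ B).symm ▸ edist_lt_top _ _)
  have heB_comm : (∀ b, Commute b β) → ∀ b s, Commute b (eB s) := fun hβ b s => by
    rw [heB]; exact ((hβ b).smul_right s).exp_right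
  constructor
  · rintro ⟨h0, h1⟩
    have hβ : ∀ b, Commute b β := fun b =>
      commute_of_forall_commute_exp_smul fun t ht => by rw [← heB]; exact h0 t ht b
    -- the one-particle component at times `2 > 1` is `ι (e^β ζ e^β)`
    have hcomp : ι (Fr (eB 1) (g (2 - 1))) ∈ relCommutant (Bl 0) (Br 0) := fun b =>
      h1 b 2 [1] (List.cons_ne_nil _ _) (List.isChain_pair.mpr (by norm_num)) (by simp)
    rw [map_mem_relCommutant_iff hι_l hι_r hι_inj,
      rightAct_mem_relCommutant_iff hFr_mul hFr_one hFlFr (heB_isUnit 1) (heB_comm hβ · 1), hg,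
      leftAct_mem_relCommutant_iff hFl_mul hFl_one hFlFr (heB_isUnit _) (heB_comm hβ · _)]
      at hcomp
    exact ⟨fun b => (hβ b).symm.eq, hcomp⟩
  · rintro ⟨hβ, hζ⟩
    have hβ' : ∀ b, Commute b β := fun b => (hβ b).symm
    have hg_mem : ∀ s, g s ∈ relCommutant Fl Fr := fun s => by
      rw [hg, leftAct_mem_relCommutant_iff hFl_mul hFl_one hFlFr (heB_isUnit s)
        (heB_comm hβ' · s)]
      exact hζ
    exact ⟨fun t _ b => (heB_comm hβ' b t).eq, fun b t ts _ _ _ =>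
      timeOrderedUnitComp_mem_relCommutant hFr_mul hFlFr hι_l hι_r htmul_l htmul_r htmul_mid
        (heB_comm hβ') hg_mem t ts b⟩
end

section
/- Let ℬ be a unital C*-algebra, E a Hilbert ℬ-module, ϑ = (ϑ_t)_{t≥0} a semigroup of unital endomorphisms of ℬ^a(E), and ξ ∈ E a unit vector. Define j_0(b) = ξbξ*, j_t = ϑ_t ∘ j_0, and p_t = j_t(1). If p_t ≥ p_0 for all t (weak dilation condition), then T_t(b) := ⟨ξ, j_t(b)ξ⟩ defines a semigroup of unital completely positive maps on ℬ: T_{s+t} = T_s ∘ T_t and T_t(1) = 1. -/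
/-- The December 2024 Mathlib `CStarModule` (right `Aᵐᵒᵖ`-action, inner product `A`-linear on
the right: `⟪x, y <• a⟫ = ⟪x, y⟫ * a`), whose Mathlib namesake now uses a left `A`-action. -/
class OldCStarModule (A E : Type*) [NonUnitalSemiring A] [StarRing A]
    [Module ℂ A] [AddCommGroup E] [Module ℂ E] [PartialOrder A] [SMul Aᵐᵒᵖ E] [Norm A] [Norm E]
    extends Inner A E where
  inner_add_right {x} {y} {z} : inner x (y + z) = inner x y + inner x z
  inner_self_nonneg {x} : 0 ≤ inner x x
  inner_self {x} : inner x x = 0 ↔ x = 0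
  inner_op_smul_right {a : A} {x y : E} : inner x (MulOpposite.op a • y) = inner x y * a
  inner_smul_right_complex {z : ℂ} {x} {y} : inner x (z • y) = z • inner x y
  star_inner x y : star (inner x y) = inner y x
  norm_eq_sqrt_norm_inner_self x : ‖x‖ = √‖inner x x‖

/-!
Because `⟪ξ, ξ⟫ = 1`, `b ↦ ξbξ*` is a *-homomorphism and `ξ⟪ξ, fξ⟫ξ* = p₀ f p₀`. The weak
dilation condition `p_s p₀ = p₀` gives `p_s ξ = ξ`, hence, `p_s` being self-adjoint,
`⟪ξ, p_s y⟫ = ⟪ξ, y⟫`; compressing `ϑ_s(p₀ f p₀) = p_s ϑ_s(f) p_s` to `ξ` with `f = ϑ_t(j₀ b)`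
gives `T_s ∘ T_t = T_{s+t}`. Complete positivity holds because
`∑ c_i* T_t(b_i* b_j) c_j = ⟪x, x⟫` for `x = ∑ ϑ_t(j₀ b_i) ξ c_i`.
-/

open scoped InnerProductSpace

namespace OldCStarModule

variable {A E : Type*} [Ring A] [StarRing A] [Module ℂ A] [PartialOrder A] [Norm A]
  [AddCommGroup E] [Module ℂ E] [Module Aᵐᵒᵖ E] [Norm E] [OldCStarModule A E]

theorem inner_op_smul_left (a : A) (x y : E) :
    ⟪MulOpposite.op a • x, y⟫_A = star a * ⟪x, y⟫_A := by
  rw [← star_inner y, inner_op_smul_right, star_mul, star_inner]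

theorem inner_sum_right {ι : Type*} (s : Finset ι) (x : E) (y : ι → E) :
    ⟪x, ∑ i ∈ s, y i⟫_A = ∑ i ∈ s, ⟪x, y i⟫_A :=
  map_sum (AddMonoidHom.mk' (fun z => ⟪x, z⟫_A) fun _ _ => inner_add_right) y s

theorem inner_sum_left {ι : Type*} (s : Finset ι) (x : ι → E) (y : E) :
    ⟪∑ i ∈ s, x i, y⟫_A = ∑ i ∈ s, ⟪x i, y⟫_A := by
  simp only [← star_inner y, inner_sum_right, star_sum]

theorem sum_sum_inner_nonneg {ι : Type*} (s : Finset ι) (x : ι → E) :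
    0 ≤ ∑ i ∈ s, ∑ j ∈ s, ⟪x i, x j⟫_A := by
  have h : (0 : A) ≤ ⟪∑ i ∈ s, x i, ∑ j ∈ s, x j⟫_A := inner_self_nonneg
  rw [inner_sum_left] at h
  simpa only [inner_sum_right] using h

/-- The operator `ξ b ξ*`; the right action of `a` is written `MulOpposite.op a •`. -/
def rankOne (ξ : E) (b : A) : E →ₗ[Aᵐᵒᵖ] E where
  toFun x := MulOpposite.op (b * ⟪ξ, x⟫_A) • ξ
  map_add' x y := by rw [inner_add_right, mul_add, MulOpposite.op_add, add_smul]
  map_smul' a x := by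
    rw [← MulOpposite.op_unop a, inner_op_smul_right, ← mul_assoc, MulOpposite.op_mul, mul_smul]
    rfl

@[simp]
theorem rankOne_apply (ξ : E) (b : A) (x : E) :
    rankOne ξ b x = MulOpposite.op (b * ⟪ξ, x⟫_A) • ξ :=
  rfl

theorem inner_rankOne_left (ξ : E) (b : A) (x y : E) :
    ⟪rankOne ξ b x, y⟫_A = ⟪x, rankOne ξ (star b) y⟫_A := by
  rw [rankOne_apply, rankOne_apply, inner_op_smul_left, inner_op_smul_right, star_mul, star_inner,
    mul_assoc]

theorem rankOne_inner_apply_self (ξ : E) (f : E →ₗ[Aᵐᵒᵖ] E) :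
    rankOne ξ ⟪ξ, f ξ⟫_A = rankOne ξ 1 * f * rankOne ξ 1 := by
  ext x
  simp only [Module.End.mul_apply, rankOne_apply, map_smul, smul_smul, ← MulOpposite.op_mul,
    one_mul]

section UnitVector

variable {ξ : E} (hξ : ⟪ξ, ξ⟫_A = 1)
include hξ

theorem rankOne_mul (a b : A) : rankOne ξ (a * b) = rankOne ξ a * rankOne ξ b := by
  ext x
  simp only [Module.End.mul_apply, rankOne_apply, inner_op_smul_right, hξ, one_mul, mul_assoc]

theorem rankOne_one_apply_self : rankOne ξ (1 : A) ξ = ξ := by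
  simp [hξ]

theorem apply_self_of_mul_rankOne_one {q : E →ₗ[Aᵐᵒᵖ] E}
    (hq : q * rankOne ξ 1 = rankOne ξ 1) : q ξ = ξ := by
  simpa only [Module.End.mul_apply, rankOne_one_apply_self hξ] using LinearMap.congr_fun hq ξ

variable {φ : (E →ₗ[Aᵐᵒᵖ] E) → (E →ₗ[Aᵐᵒᵖ] E)} (hφ_mul : ∀ f g, φ (f * g) = φ f * φ g)
  (hφ_adj : ∀ b x y, ⟪φ (rankOne ξ b) x, y⟫_A = ⟪x, φ (rankOne ξ (star b)) y⟫_A)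
include hφ_mul hφ_adj

theorem inner_map_rankOne_inner_apply_self
    (hφ_incr : φ (rankOne ξ 1) * rankOne ξ 1 = rankOne ξ 1) (f : E →ₗ[Aᵐᵒᵖ] E) :
    ⟪ξ, φ (rankOne ξ ⟪ξ, f ξ⟫_A) ξ⟫_A = ⟪ξ, φ f ξ⟫_A := by
  have hfix : φ (rankOne ξ 1) ξ = ξ := apply_self_of_mul_rankOne_one hξ hφ_incr
  have hadj_one : ∀ x y, ⟪φ (rankOne ξ 1) x, y⟫_A = ⟪x, φ (rankOne ξ 1) y⟫_A := by
    simpa only [star_one] using hφ_adj 1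
  rw [rankOne_inner_apply_self, hφ_mul, hφ_mul, Module.End.mul_apply, Module.End.mul_apply,
    hfix, ← hadj_one, hfix]

theorem sum_sum_star_mul_inner_map_rankOne_mul_nonneg {ι : Type*} (s : Finset ι) (b c : ι → A) :
    0 ≤ ∑ i ∈ s, ∑ j ∈ s, star (c i) * ⟪ξ, φ (rankOne ξ (star (b i) * b j)) ξ⟫_A * c j := by
  have hterm : ∀ i j, star (c i) * ⟪ξ, φ (rankOne ξ (star (b i) * b j)) ξ⟫_A * c j =
      ⟪φ (rankOne ξ (b i)) (MulOpposite.op (c i) • ξ),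
        φ (rankOne ξ (b j)) (MulOpposite.op (c j) • ξ)⟫_A := by
    intro i j
    rw [rankOne_mul hξ, hφ_mul, Module.End.mul_apply, map_smul, map_smul, inner_op_smul_left,
      inner_op_smul_right, hφ_adj, mul_assoc]
  simp only [hterm]
  exact sum_sum_inner_nonneg s _

end UnitVector

end OldCStarModule

open OldCStarModule

theorem weak_dilation_gives_CP_semigroup_general
    {ℬ : Type*} [CStarAlgebra ℬ] [PartialOrder ℬ]
    {E : Type*} [AddCommGroup E] [Module ℂ E] [Module ℬᵐᵒᵖ E] [Norm E] [OldCStarModule ℬ E]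
    (ξ : E) (hξ : (inner ℬ ξ ξ : ℬ) = 1)
    (Θ : ℝ → (E →ₗ[ℬᵐᵒᵖ] E) → (E →ₗ[ℬᵐᵒᵖ] E))
    (hΘ_semi : ∀ s t : ℝ, 0 ≤ s → 0 ≤ t → ∀ f, Θ (s + t) f = Θ s (Θ t f))
    (hΘ_mul : ∀ t, 0 ≤ t → ∀ f g, Θ t (f * g) = Θ t f * Θ t g)
    -- `Θ t` preserves adjoints: if `g` is an adjoint of `f` then `Θ t g` is an adjoint
    -- of `Θ t f`:
    (hΘ_star : ∀ t, 0 ≤ t → ∀ f g : E →ₗ[ℬᵐᵒᵖ] E,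
      (∀ x y, (inner ℬ (f x) y : ℬ) = inner ℬ x (g y)) →
      (∀ x y, (inner ℬ (Θ t f x) y : ℬ) = inner ℬ x (Θ t g y)))
    -- `j₀ b = ξbξ*`:
    (j₀ : ℬ → E →ₗ[ℬᵐᵒᵖ] E)
    (hj₀ : ∀ b y, j₀ b y = MulOpposite.op (b * (inner ℬ ξ y : ℬ)) • ξ)
    -- the weak dilation condition `p_t ≥ p₀`, i.e. `p_t p₀ = p₀`:
    (hincr : ∀ t, 0 ≤ t → Θ t (j₀ 1) * j₀ 1 = j₀ 1)
    (T : ℝ → ℬ → ℬ)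
    (hT : ∀ t b, T t b = (inner ℬ ξ (Θ t (j₀ b) ξ) : ℬ)) :
    (∀ s t : ℝ, 0 ≤ s → 0 ≤ t → ∀ b, T (s + t) b = T s (T t b)) ∧
    (∀ t, 0 ≤ t → T t 1 = 1) ∧
    -- complete positivity of each `T t`:
    (∀ t, 0 ≤ t → ∀ (n : ℕ) (b c : Fin n → ℬ),
      0 ≤ ∑ i, ∑ j, star (c i) * T t (star (b i) * b j) * c j) := by
  obtain rfl : j₀ = rankOne ξ := funext fun b => LinearMap.ext (hj₀ b)
  have hΘ_adj : ∀ t, 0 ≤ t → ∀ b x y,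
      ⟪Θ t (rankOne ξ b) x, y⟫_ℬ = ⟪x, Θ t (rankOne ξ (star b)) y⟫_ℬ := fun t ht b =>
    hΘ_star t ht _ _ (inner_rankOne_left ξ b)
  refine ⟨fun s t hs ht b => ?_, fun t ht => ?_, fun t ht n b c => ?_⟩
  · rw [hT, hT, hT, hΘ_semi s t hs ht,
      inner_map_rankOne_inner_apply_self hξ (hΘ_mul s hs) (hΘ_adj s hs) (hincr s hs)]
  · rw [hT, apply_self_of_mul_rankOne_one hξ (hincr t ht), hξ]
  · simp only [hT]
    exact sum_sum_star_mul_inner_map_rankOne_mul_nonneg hξ (hΘ_mul t ht) (hΘ_adj t ht) _ b c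

/-- **Weak dilations compress to CP-semigroups.**
Let `E` be a Hilbert `ℬ`-module with unit vector `ξ`, let `ϑ = (ϑ_t)` be a semigroup of
unital *-endomorphisms of `ℬ^a(E)` (encoded below as multiplicative, additive, unital,
adjoint-preserving maps `Θ t` on right `ℬ`-linear maps of `E`), let
`j₀(b) = ξbξ*`, `j_t = ϑ_t ∘ j₀` and `p_t = j_t(1)`.  If `p_t ≥ p₀` for all `t ≥ 0`
(weak dilation condition), then `T_t(b) = ⟪ξ, j_t(b)ξ⟫` defines a semigroup of unital
completely positive maps on `ℬ`: `T_{s+t} = T_s ∘ T_t` and `T_t(1) = 1`. -/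
theorem weak_dilation_gives_CP_semigroup
    {ℬ : Type*} [CStarAlgebra ℬ] [PartialOrder ℬ] [StarOrderedRing ℬ]
    {E : Type*} [AddCommGroup E] [Module ℂ E] [Module ℬᵐᵒᵖ E] [Norm E] [OldCStarModule ℬ E]
    (ξ : E) (hξ : (inner ℬ ξ ξ : ℬ) = 1)
    (Θ : ℝ → (E →ₗ[ℬᵐᵒᵖ] E) → (E →ₗ[ℬᵐᵒᵖ] E))
    (hΘ_semi : ∀ s t : ℝ, 0 ≤ s → 0 ≤ t → ∀ f, Θ (s + t) f = Θ s (Θ t f))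
    (hΘ_zero : ∀ f, Θ 0 f = f)
    (hΘ_mul : ∀ t, 0 ≤ t → ∀ f g, Θ t (f * g) = Θ t f * Θ t g)
    (hΘ_add : ∀ t, 0 ≤ t → ∀ f g, Θ t (f + g) = Θ t f + Θ t g)
    (hΘ_one : ∀ t, 0 ≤ t → Θ t 1 = 1)
    -- `Θ t` preserves adjoints: if `g` is an adjoint of `f` then `Θ t g` is an adjoint
    -- of `Θ t f`:
    (hΘ_star : ∀ t, 0 ≤ t → ∀ f g : E →ₗ[ℬᵐᵒᵖ] E,
      (∀ x y, (inner ℬ (f x) y : ℬ) = inner ℬ x (g y)) →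
      (∀ x y, (inner ℬ (Θ t f x) y : ℬ) = inner ℬ x (Θ t g y)))
    -- `j₀ b = ξbξ*`:
    (j₀ : ℬ → E →ₗ[ℬᵐᵒᵖ] E)
    (hj₀ : ∀ b y, j₀ b y = MulOpposite.op (b * (inner ℬ ξ y : ℬ)) • ξ)
    -- the weak dilation condition `p_t ≥ p₀`, i.e. `p_t p₀ = p₀`:
    (hincr : ∀ t, 0 ≤ t → Θ t (j₀ 1) * j₀ 1 = j₀ 1)
    (T : ℝ → ℬ → ℬ)
    (hT : ∀ t b, T t b = (inner ℬ ξ (Θ t (j₀ b) ξ) : ℬ)) :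
    (∀ s t : ℝ, 0 ≤ s → 0 ≤ t → ∀ b, T (s + t) b = T s (T t b)) ∧
    (∀ t, 0 ≤ t → T t 1 = 1) ∧
    -- complete positivity of each `T t`:
    (∀ t, 0 ≤ t → ∀ (n : ℕ) (b c : Fin n → ℬ),
      0 ≤ ∑ i, ∑ j, star (c i) * T t (star (b i) * b j) * c j) :=
  weak_dilation_gives_CP_semigroup_general ξ hξ Θ hΘ_semi hΘ_mul hΘ_star j₀ hj₀ hincr T hT
end

section
/- Let ℬ be a unital C*-algebra, E a Hilbert ℬ-module with unit vector ξ, and ϑ a strict E₀-semigroup on ℬ^a(E) with p_t := ϑ_t(ξξ*) ≥ ξξ* for all t. If moreover bξ = ξb in E for a given left ℬ-action on E and ϑ_t(ξξ*) commutes with the left action for all t, then T_t(b) = ⟨ξ, ϑ_t(ξbξ*)ξ⟩ equals b for all b ∈ ℬ and t ≥ 0 if and only if the unit (ξ_t)_{t≥0} with ξ_t = ξ ∈ p_t E is central (bξ_t = ξ_t b). -/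
/-- The Hilbert C⋆-module class `CStarModule` as it stood in Mathlib of December 2024
(right `A`-module via `Aᵐᵒᵖ`); Mathlib's `CStarModule` is now a left-module notion. -/
class CStarModuleOld (A E : Type*) [NonUnitalSemiring A] [StarRing A]
    [Module ℂ A] [AddCommGroup E] [Module ℂ E] [PartialOrder A] [SMul Aᵐᵒᵖ E] [Norm A] [Norm E]
    extends Inner A E where
  inner_add_right {x} {y} {z} : inner x (y + z) = inner x y + inner x z
  inner_self_nonneg {x} : 0 ≤ inner x x
  inner_self {x} : inner x x = 0 ↔ x = 0
  inner_op_smul_right {a : A} {x y : E} : inner x (MulOpposite.op a • y) = inner x y * a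
  inner_smul_right_complex {z : ℂ} {x} {y} : inner x (z • y) = z • inner x y
  star_inner x y : star (inner x y) = inner y x
  norm_eq_sqrt_norm_inner_self x : ‖x‖ = Real.sqrt ‖inner x x‖

/-!
If `T_t = id`, then `v := ϑ_t(ξbξ*)ξ` satisfies `⟨ξ, v⟩ = T_t(b) = b` and, since `ϑ_t` is a
`*`-homomorphism, `⟨v, v⟩ = ⟨ξ, ϑ_t(ξb*bξ*)ξ⟩ = T_t(b*b) = b*b`. For a unit vector `ξ` these
two identities force `⟨v - ξb, v - ξb⟩ = 0`, i.e. `v = ξb`, which is centrality of the unit.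
Conversely, centrality gives `T_t(b) = ⟨ξ, ξb⟩ = b` directly.
-/

namespace CStarModuleOld

open MulOpposite

variable {A E : Type*} [Ring A] [StarRing A] [Module ℂ A] [PartialOrder A] [Norm A]
  [AddCommGroup E] [Module ℂ E] [SMul Aᵐᵒᵖ E] [Norm E] [CStarModuleOld A E]

theorem inner_sub_right (x y z : E) : (inner A x (y - z) : A) = inner A x y - inner A x z :=
  eq_sub_of_add_eq (by rw [← inner_add_right, sub_add_cancel])

theorem inner_sub_left (x y z : E) : (inner A (x - y) z : A) = inner A x z - inner A y z := by
  rw [← star_inner, inner_sub_right, star_sub, star_inner, star_inner]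

theorem inner_op_smul_left (a : A) (x y : E) :
    (inner A (op a • x) y : A) = star a * inner A x y := by
  rw [← star_inner, inner_op_smul_right, star_mul, star_inner]

theorem inner_op_smul_of_inner_self_eq_one {ξ : E} (hξ : (inner A ξ ξ : A) = 1) (a : A) :
    (inner A ξ (op a • ξ) : A) = a := by
  rw [inner_op_smul_right, hξ, one_mul]

/-- The rank-one operator `ξbξ*`. -/
def rankOne (ξ : E) (b : A) (y : E) : E := op (b * inner A ξ y) • ξ

theorem inner_rankOne_left (ξ : E) (b : A) (x y : E) :
    (inner A (rankOne ξ b x) y : A) = inner A x (rankOne ξ (star b) y) := by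
  rw [rankOne, rankOne, inner_op_smul_left, inner_op_smul_right, star_mul, star_inner, mul_assoc]

theorem rankOne_rankOne {ξ : E} (hξ : (inner A ξ ξ : A) = 1) (a b : A) (y : E) :
    rankOne ξ a (rankOne ξ b y) = rankOne ξ (a * b) y := by
  rw [rankOne, rankOne, inner_op_smul_of_inner_self_eq_one hξ, rankOne, mul_assoc]

/-- Equality case of `⟨ξ, v⟩* ⟨ξ, v⟩ ≤ ⟨v, v⟩` for a unit vector `ξ`. -/
theorem eq_op_inner_smul_of_inner_self_eq {ξ v : E} (hξ : (inner A ξ ξ : A) = 1)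
    (hv : (inner A v v : A) = star (inner A ξ v) * inner A ξ v) :
    v = op (inner A ξ v : A) • ξ := by
  set b : A := inner A ξ v
  have hvξ : (inner A v ξ : A) = star b := (star_inner ξ v).symm
  have hnorm : (inner A (v - op b • ξ) (v - op b • ξ) : A) = 0 := by
    simp only [inner_sub_left, inner_sub_right, inner_op_smul_left, inner_op_smul_right, hv, hvξ,
      hξ]
    noncomm_ring
  exact sub_eq_zero.mp (inner_self.mp hnorm)

end CStarModuleOld

theorem weak_dilation_is_noise_iff_unit_central_general
    {ℬ : Type*} [CStarAlgebra ℬ] [PartialOrder ℬ]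
    {E : Type*} [AddCommGroup E] [Module ℂ E] [Module ℬᵐᵒᵖ E] [Norm E] [CStarModuleOld ℬ E]
    (ξ : E) (hξ : (inner ℬ ξ ξ : ℬ) = 1)
    (Θ : ℝ → (E →ₗ[ℬᵐᵒᵖ] E) → (E →ₗ[ℬᵐᵒᵖ] E))
    (hΘ_mul : ∀ t, 0 ≤ t → ∀ f g, Θ t (f * g) = Θ t f * Θ t g)
    (hΘ_star : ∀ t, 0 ≤ t → ∀ f g : E →ₗ[ℬᵐᵒᵖ] E,
      (∀ x y, (inner ℬ (f x) y : ℬ) = inner ℬ x (g y)) →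
      (∀ x y, (inner ℬ (Θ t f x) y : ℬ) = inner ℬ x (Θ t g y)))
    -- `j₀ b = ξbξ*`:
    (j₀ : ℬ → E →ₗ[ℬᵐᵒᵖ] E)
    (hj₀ : ∀ b y, j₀ b y = MulOpposite.op (b * (inner ℬ ξ y : ℬ)) • ξ)
    (T : ℝ → ℬ → ℬ)
    (hT : ∀ t b, T t b = (inner ℬ ξ (Θ t (j₀ b) ξ) : ℬ)) :
    (∀ t, 0 ≤ t → ∀ b, T t b = b) ↔
    (∀ t, 0 ≤ t → ∀ b, Θ t (j₀ b) ξ = MulOpposite.op b • ξ) := by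
  have hj₀_adjoint (b : ℬ) (x y : E) : (inner ℬ (j₀ b x) y : ℬ) = inner ℬ x (j₀ (star b) y) := by
    rw [hj₀, hj₀]
    exact CStarModuleOld.inner_rankOne_left ξ b x y
  have hj₀_mul (a b : ℬ) : j₀ a * j₀ b = j₀ (a * b) := by
    ext y
    rw [Module.End.mul_apply, hj₀, hj₀, hj₀]
    exact CStarModuleOld.rankOne_rankOne hξ a b y
  refine ⟨fun hnoise t ht b => ?_, fun hcentral t ht b => ?_⟩
  · set v := Θ t (j₀ b) ξ
    have hξv : (inner ℬ ξ v : ℬ) = b := by rw [← hT, hnoise t ht]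
    have hvv : (inner ℬ v v : ℬ) = star b * b := by
      rw [hΘ_star t ht _ _ (hj₀_adjoint b), ← Module.End.mul_apply, ← hΘ_mul t ht, hj₀_mul, ← hT,
        hnoise t ht]
    calc v = MulOpposite.op (inner ℬ ξ v : ℬ) • ξ :=
          CStarModuleOld.eq_op_inner_smul_of_inner_self_eq hξ (by rw [hvv, hξv])
      _ = MulOpposite.op b • ξ := by rw [hξv]
  · rw [hT, hcentral t ht, CStarModuleOld.inner_op_smul_of_inner_self_eq_one hξ]

/-- **A weak dilation is a (weak) noise iff the associated unit is central.**
Let `E` be a Hilbert `ℬ`-module with unit vector `ξ` and a left `ℬ`-action `L`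
satisfying `bξ = ξb`, and let `ϑ` (encoded by `Θ` acting on right `ℬ`-linear maps) be a
strict E₀-semigroup on `ℬ^a(E)` with `p_t := ϑ_t(ξξ*) ≥ ξξ*` and such that each
`ϑ_t(ξξ*)` commutes with the left action.  Then `T_t(b) = ⟪ξ, ϑ_t(ξbξ*)ξ⟫ = b` for all
`b` and `t ≥ 0` if and only if the unit `(ξ_t)` (with `ξ_t = ξ ∈ p_t E` and left action
`b · x = ϑ_t(ξbξ*)x`) is central, i.e. `ϑ_t(ξbξ*)ξ = ξb` for all `b` and `t ≥ 0`. -/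
theorem weak_dilation_is_noise_iff_unit_central
    {ℬ : Type*} [CStarAlgebra ℬ] [PartialOrder ℬ] [StarOrderedRing ℬ]
    {E : Type*} [AddCommGroup E] [Module ℂ E] [Module ℬᵐᵒᵖ E] [Norm E] [CStarModuleOld ℬ E]
    (ξ : E) (hξ : (inner ℬ ξ ξ : ℬ) = 1)
    -- the given left action of ℬ on E (by right `ℬ`-linear maps):
    (L : ℬ → E →ₗ[ℬᵐᵒᵖ] E)
    (hL_mul : ∀ a b, L (a * b) = L a * L b) (hL_one : L 1 = 1)
    -- `bξ = ξb`:
    (hLξ : ∀ b, L b ξ = MulOpposite.op b • ξ)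
    (Θ : ℝ → (E →ₗ[ℬᵐᵒᵖ] E) → (E →ₗ[ℬᵐᵒᵖ] E))
    (hΘ_semi : ∀ s t : ℝ, 0 ≤ s → 0 ≤ t → ∀ f, Θ (s + t) f = Θ s (Θ t f))
    (hΘ_zero : ∀ f, Θ 0 f = f)
    (hΘ_mul : ∀ t, 0 ≤ t → ∀ f g, Θ t (f * g) = Θ t f * Θ t g)
    (hΘ_add : ∀ t, 0 ≤ t → ∀ f g, Θ t (f + g) = Θ t f + Θ t g)
    (hΘ_one : ∀ t, 0 ≤ t → Θ t 1 = 1)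
    (hΘ_star : ∀ t, 0 ≤ t → ∀ f g : E →ₗ[ℬᵐᵒᵖ] E,
      (∀ x y, (inner ℬ (f x) y : ℬ) = inner ℬ x (g y)) →
      (∀ x y, (inner ℬ (Θ t f x) y : ℬ) = inner ℬ x (Θ t g y)))
    -- `j₀ b = ξbξ*`:
    (j₀ : ℬ → E →ₗ[ℬᵐᵒᵖ] E)
    (hj₀ : ∀ b y, j₀ b y = MulOpposite.op (b * (inner ℬ ξ y : ℬ)) • ξ)
    -- `p_t = ϑ_t(ξξ*) ≥ ξξ* = p₀`:
    (hincr : ∀ t, 0 ≤ t → Θ t (j₀ 1) * j₀ 1 = j₀ 1)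
    -- `ϑ_t(ξξ*)` commutes with the left action:
    (hcomm : ∀ t, 0 ≤ t → ∀ b, Θ t (j₀ 1) * L b = L b * Θ t (j₀ 1))
    (T : ℝ → ℬ → ℬ)
    (hT : ∀ t b, T t b = (inner ℬ ξ (Θ t (j₀ b) ξ) : ℬ)) :
    (∀ t, 0 ≤ t → ∀ b, T t b = b) ↔
    (∀ t, 0 ≤ t → ∀ b, Θ t (j₀ b) ξ = MulOpposite.op b • ξ) :=
  weak_dilation_is_noise_iff_unit_central_general ξ hξ Θ hΘ_mul hΘ_star j₀ hj₀ T hT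
end
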